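/- arXiv:2012.09871 — 2 statements merged into one kernel-verified Lean document; each statement's English description precedes it below -/
import Mathlib

section
/- Let X be a metric space and let γ, γ̄ : ℝ → X be isometric embeddings (lines) such that the Hausdorff distance between their images is at most C and d(γ(0), γ̄(0)) ≤ C. Then for every t ∈ ℝ, min{ d(γ(t), γ̄(t)), d(γ(t), γ̄(−t)) } ≤ 3C; consequently, after possibly replacing γ̄ by the reversed line t ↦ γ̄(−t), one has d(γ(t), γ̄(t)) ≤ 3C for all t ∈ ℝ. -/
open Set Filter MeasureTheory Metric
open scoped ENNReal NNReal Topology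

/-- A (geodesic) line in a metric space: a map `γ : ℝ → X` with
`d(γ s, γ t) = |s - t|` for all `s, t`, i.e. an isometric embedding of `ℝ`
(in a Riemannian manifold such a curve is automatically a geodesic that
minimizes the distance between any two of its points). -/
def IsLine {X : Type} [MetricSpace X] (γ : ℝ → X) : Prop :=
  ∀ s t : ℝ, dist (γ s) (γ t) = |s - t|

/-- A (geodesic) ray: a map `γ : ℝ → X` with `d(γ s, γ t) = |s - t|`
for all `s, t ≥ 0`, i.e. an isometric embedding of `[0, ∞)`. -/
def IsRay {X : Type} [MetricSpace X] (γ : ℝ → X) : Prop :=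
  ∀ s t : ℝ, 0 ≤ s → 0 ≤ t → dist (γ s) (γ t) = |s - t|

/-- A minimizing (unit-speed) geodesic segment defined on `[a, b]`. -/
def IsMinimizingSegment {X : Type} [MetricSpace X] (σ : ℝ → X) (a b : ℝ) : Prop :=
  ∀ s ∈ Set.Icc a b, ∀ t ∈ Set.Icc a b, dist (σ s) (σ t) = |s - t|

/-- Two rays are asymptotes if they stay within bounded distance of each other. -/
def Asymptotic {X : Type} [MetricSpace X] (γ σ : ℝ → X) : Prop :=
  ∃ C : ℝ, 0 < C ∧ ∀ t : ℝ, 0 ≤ t → dist (γ t) (σ t) ≤ C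

/-- A set is geodesically convex if every minimizing geodesic segment
between two of its points is contained in it. -/
def GeodesicallyConvex {X : Type} [MetricSpace X] (A : Set X) : Prop :=
  ∀ (σ : ℝ → X) (a b : ℝ), a ≤ b → IsMinimizingSegment σ a b →
    σ a ∈ A → σ b ∈ A → ∀ t ∈ Set.Icc a b, σ t ∈ A

/-!
Every point `γ s` has a `C`-close point `γ' w` on the other line (the infimum of the distance
to a line is attained), and comparing with the base points `γ 0`, `γ' 0` gives
`min |w - s| |w + s| ≤ 2C`; one more triangle inequality gives the pointwise bound `3C`.

For the global choice of orientation, suppose `d(γ a, γ' a) > 3C` with `a ≥ 0`. Then no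
`C`-close partner `(s, w)` lies in the `ℓ¹`-ball of radius `d(γ a, γ' a) - C` around `(a, a)`,
so the partner of `a` is near `-a`. Partners of nearby times are `2C`-close up to the time
step, and the ball is too wide to be jumped over, so by induction in small steps the partner
of every `s ≥ a` stays near `-s`. Hence a failure of the direct bound forces the partners of
large times to be near `-s`, a failure of the reversed bound forces them to be near `s`, and
both cannot happen.
-/

section Lines

variable {X : Type} [MetricSpace X] {γ γ' : ℝ → X} {C : ℝ}

theorem IsLine.isometry (hγ : IsLine γ) : Isometry γ :=
  Isometry.of_dist_eq fun s t => by rw [hγ, Real.dist_eq]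

theorem IsLine.comp_neg (hγ : IsLine γ) : IsLine fun t => γ (-t) := fun s t => by
  rw [hγ, ← abs_neg, neg_sub, sub_neg_eq_add, neg_add_eq_sub]

theorem IsLine.exists_dist_le_of_infEDist_le (hγ : IsLine γ) {x : X} (hC : 0 ≤ C)
    (h : infEDist x (range γ) ≤ ENNReal.ofReal C) : ∃ w, dist x (γ w) ≤ C := by
  have hlim : Tendsto (fun s => dist x (γ s)) (cocompact ℝ) atTop := by
    refine tendsto_atTop_mono (fun s => ?_) <| tendsto_atTop_add_const_right _
      (-dist x (γ 0)) (tendsto_dist_right_cocompact_atTop 0)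
    have := dist_triangle_left (γ s) (γ 0) x
    rw [hγ.isometry.dist_eq] at this
    linarith
  obtain ⟨w, hw⟩ := (continuous_const.dist hγ.isometry.continuous).exists_forall_le hlim
  refine ⟨w, (edist_le_ofReal hC).1 (le_trans ?_ h)⟩
  refine le_infEDist.2 ?_
  rintro _ ⟨s, rfl⟩
  rw [edist_dist, edist_dist]
  exact ENNReal.ofReal_le_ofReal (hw s)

theorem IsLine.abs_sub_le_abs_sub_add_of_dist_le (hγ : IsLine γ) (hγ' : IsLine γ')
    {s s' w w' : ℝ} (h : dist (γ s) (γ' w) ≤ C) (h' : dist (γ s') (γ' w') ≤ C) :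
    |s - s'| ≤ |w - w'| + 2 * C := by
  have := dist_triangle4 (γ s) (γ' w) (γ' w') (γ s')
  rw [hγ, hγ', dist_comm (γ' w')] at this
  linarith

theorem IsLine.dist_le_abs_sub_add_add_abs_sub (hγ : IsLine γ) (hγ' : IsLine γ')
    {s w : ℝ} (h : dist (γ s) (γ' w) ≤ C) (t u : ℝ) :
    dist (γ t) (γ' u) ≤ |t - s| + C + |w - u| := by
  have := dist_triangle4 (γ t) (γ s) (γ' w) (γ' u)
  rw [hγ, hγ'] at this
  linarith

theorem IsLine.abs_sub_le_or_abs_add_le (hγ : IsLine γ) (hγ' : IsLine γ')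
    (h0 : dist (γ 0) (γ' 0) ≤ C) {s w : ℝ} (h : dist (γ s) (γ' w) ≤ C) :
    |w - s| ≤ 2 * C ∨ |w + s| ≤ 2 * C := by
  have hs := hγ.abs_sub_le_abs_sub_add_of_dist_le hγ' h h0
  have hw := hγ'.abs_sub_le_abs_sub_add_of_dist_le hγ (C := C) (s := w) (s' := 0)
    (by rwa [dist_comm]) (by rwa [dist_comm])
  rw [sub_zero, sub_zero] at hs hw
  rcases abs_cases w with ⟨hw', _⟩ | ⟨hw', _⟩ <;> rcases abs_cases s with ⟨hs', _⟩ | ⟨hs', _⟩ <;>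
    first
    | exact Or.inl (abs_le.2 ⟨by linarith, by linarith⟩)
    | exact Or.inr (abs_le.2 ⟨by linarith, by linarith⟩)

theorem IsLine.min_dist_le_three_mul (hγ : IsLine γ) (hγ' : IsLine γ')
    (h0 : dist (γ 0) (γ' 0) ≤ C) {t w : ℝ} (h : dist (γ t) (γ' w) ≤ C) :
    min (dist (γ t) (γ' t)) (dist (γ t) (γ' (-t))) ≤ 3 * C := by
  have hclose := hγ.dist_le_abs_sub_add_add_abs_sub hγ' h t
  simp only [sub_self, abs_zero, zero_add] at hclose
  rcases hγ.abs_sub_le_or_abs_add_le hγ' h0 h with hdir | hrev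
  · exact (min_le_left _ _).trans (by linarith [hclose t])
  · exact (min_le_right _ _).trans (by linarith [sub_neg_eq_add w t ▸ hclose (-t)])

theorem IsLine.abs_add_le_of_abs_add_le_of_three_mul_lt_dist (hγ : IsLine γ) (hγ' : IsLine γ')
    (h0 : dist (γ 0) (γ' 0) ≤ C) {a s s' w w' : ℝ} (ha : 0 ≤ a) (has' : a ≤ s') (hss' : s ≤ s')
    (hstep : s' - s < dist (γ a) (γ' a) - 3 * C) (hw : dist (γ s) (γ' w) ≤ C)
    (hws : |w + s| ≤ 2 * C) (hw' : dist (γ s') (γ' w') ≤ C) : |w' + s'| ≤ 2 * C := by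
  refine (hγ.abs_sub_le_or_abs_add_le hγ' h0 hw').resolve_left fun hdir => ?_
  have hball := hγ.dist_le_abs_sub_add_add_abs_sub hγ' hw' a a
  have hbase := hγ.dist_le_abs_sub_add_add_abs_sub hγ' h0 a a
  have hjump := hγ'.abs_sub_le_abs_sub_add_of_dist_le hγ (C := C) (s := w') (s' := w)
    (by rwa [dist_comm]) (by rwa [dist_comm])
  rw [abs_of_nonpos (by linarith : a - s' ≤ 0)] at hball
  rw [sub_zero, zero_sub, abs_neg, abs_of_nonneg ha] at hbase
  rw [abs_of_nonneg (by linarith : 0 ≤ s' - s)] at hjump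
  obtain ⟨hdir, -⟩ := abs_le.1 hdir
  obtain ⟨-, hws⟩ := abs_le.1 hws
  have := le_abs_self (w' - w)
  rcases abs_cases (w' - a) with ⟨hwa, -⟩ | ⟨hwa, -⟩ <;> linarith

theorem IsLine.abs_add_le_of_three_mul_lt_dist_of_le (hγ : IsLine γ) (hγ' : IsLine γ')
    (h0 : dist (γ 0) (γ' 0) ≤ C) (hcover : ∀ s, ∃ w, dist (γ s) (γ' w) ≤ C) {a s w : ℝ}
    (ha : 0 ≤ a) (hfar : 3 * C < dist (γ a) (γ' a)) (has : a ≤ s)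
    (hw : dist (γ s) (γ' w) ≤ C) : |w + s| ≤ 2 * C := by
  obtain ⟨δ, hδ, hδm⟩ : ∃ δ, 0 < δ ∧ δ < dist (γ a) (γ' a) - 3 * C :=
    ⟨(dist (γ a) (γ' a) - 3 * C) / 2, by linarith, by linarith⟩
  suffices ∀ n : ℕ, ∀ s, a ≤ s → s ≤ a + n * δ → ∀ w, dist (γ s) (γ' w) ≤ C →
      |w + s| ≤ 2 * C by
    obtain ⟨n, hn⟩ := exists_nat_ge ((s - a) / δ)
    exact this n s has (by linarith [(div_le_iff₀ hδ).1 hn]) w hw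
  intro n
  induction n with
  | zero =>
    intro s has hsa w hw
    obtain rfl : s = a := by simp only [Nat.cast_zero, zero_mul, add_zero] at hsa; linarith
    refine (hγ.abs_sub_le_or_abs_add_le hγ' h0 hw).resolve_left fun hdir => ?_
    have := hγ.dist_le_abs_sub_add_add_abs_sub hγ' hw s s
    rw [sub_self, abs_zero] at this
    linarith
  | succ n ih =>
    intro s has hs w hw
    rcases le_or_gt s (a + n * δ) with hle | hgt
    · exact ih s has hle w hw
    · obtain ⟨v, hv⟩ := hcover (max a (s - δ))
      push_cast at hs
      have := mul_nonneg n.cast_nonneg hδ.le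
      refine hγ.abs_add_le_of_abs_add_le_of_three_mul_lt_dist hγ' h0 ha has
        (max_le has (by linarith)) ?_ hv ?_ hw
      · linarith [le_max_right a (s - δ)]
      · exact ih _ (le_max_left _ _) (max_le (by linarith) (by linarith)) v hv

theorem IsLine.abs_add_le_of_three_mul_lt_dist (hγ : IsLine γ) (hγ' : IsLine γ')
    (h0 : dist (γ 0) (γ' 0) ≤ C) (hcover : ∀ s, ∃ w, dist (γ s) (γ' w) ≤ C) {a p w : ℝ}
    (hfar : 3 * C < dist (γ a) (γ' a)) (hap : |a| ≤ p) (hp : 3 * C < p)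
    (hw : dist (γ p) (γ' w) ≤ C) : |w + p| ≤ 2 * C := by
  rcases le_total 0 a with ha | ha
  · exact hγ.abs_add_le_of_three_mul_lt_dist_of_le hγ' h0 hcover ha hfar
      ((le_abs_self a).trans hap) hw
  -- For `a ≤ 0`, reverse both lines: the partner `v` of `-p` is then near `p`, and partners
  -- of `p` and `-p` are at distance at least `2p - 2C`.
  obtain ⟨v, hv⟩ := hcover (-p)
  have hvp : |-v + p| ≤ 2 * C := by
    refine hγ.comp_neg.abs_add_le_of_three_mul_lt_dist_of_le hγ'.comp_neg (by simpa using h0)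
      (fun s => ?_) (neg_nonneg.2 ha) (by simpa using hfar) (by linarith [neg_le_abs a])
      (by simpa using hv)
    obtain ⟨w, hw⟩ := hcover (-s)
    exact ⟨-w, by simpa using hw⟩
  refine (hγ.abs_sub_le_or_abs_add_le hγ' h0 hw).resolve_left fun hdir => ?_
  have hsep := hγ.abs_sub_le_abs_sub_add_of_dist_le hγ' hw hv
  rw [sub_neg_eq_add, abs_of_nonneg (by linarith [(abs_nonneg a).trans hap] : 0 ≤ p + p)] at hsep
  have htri := abs_sub_le w p v
  rw [show p - v = -v + p by ring] at htri
  linarith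

end Lines

/-- Let `X` be a metric space and let `γ, γ̄ : ℝ → X` be lines
(isometric embeddings of `ℝ`) such that the Hausdorff distance between their images
is at most `C` and `d(γ 0, γ̄ 0) ≤ C`. Then for every `t`,
`min (d(γ t, γ̄ t)) (d(γ t, γ̄ (-t))) ≤ 3C`; consequently, after possibly replacing
`γ̄` by the reversed line `t ↦ γ̄ (-t)`, one has `d(γ t, γ̄ t) ≤ 3C` for all `t`. -/
theorem dist_le_three_mul_of_hausdorff_close_lines
    {X : Type} [MetricSpace X] (γ γ' : ℝ → X) (C : ℝ)
    (hγ : IsLine γ) (hγ' : IsLine γ')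
    (hH : EMetric.hausdorffEdist (Set.range γ) (Set.range γ') ≤ ENNReal.ofReal C)
    (h0 : dist (γ 0) (γ' 0) ≤ C) :
    (∀ t : ℝ, min (dist (γ t) (γ' t)) (dist (γ t) (γ' (-t))) ≤ 3 * C) ∧
    ((∀ t : ℝ, dist (γ t) (γ' t) ≤ 3 * C) ∨
      (∀ t : ℝ, dist (γ t) (γ' (-t)) ≤ 3 * C)) := by
  have hC : 0 ≤ C := dist_nonneg.trans h0
  have hcover : ∀ s, ∃ w, dist (γ s) (γ' w) ≤ C := fun s =>
    hγ'.exists_dist_le_of_infEDist_le hC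
      ((infEDist_le_hausdorffEDist_of_mem (mem_range_self s)).trans hH)
  refine ⟨fun t => ?_, ?_⟩
  · obtain ⟨w, hw⟩ := hcover t
    exact hγ.min_dist_le_three_mul hγ' h0 hw
  by_contra! ⟨⟨a, ha⟩, b, hb⟩
  obtain ⟨p, hap, hbp, hp⟩ : ∃ p, |a| ≤ p ∧ |b| ≤ p ∧ 3 * C < p :=
    ⟨|a| + |b| + 3 * C + 1, by linarith [abs_nonneg b], by linarith [abs_nonneg a],
      by linarith [abs_nonneg a, abs_nonneg b]⟩
  obtain ⟨w, hw⟩ := hcover p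
  have hrev : |w + p| ≤ 2 * C := hγ.abs_add_le_of_three_mul_lt_dist hγ' h0 hcover ha hap hp hw
  have hdir : |-w + p| ≤ 2 * C := by
    refine hγ.abs_add_le_of_three_mul_lt_dist hγ'.comp_neg (by simpa using h0) (fun s => ?_) hb
      hbp hp (by simpa using hw)
    obtain ⟨w, hw⟩ := hcover s
    exact ⟨-w, by simpa using hw⟩
  linarith [(abs_le.1 hrev).2, (abs_le.1 hdir).2]
end

section
/- Let M be a Riemannian surface without conjugate points admitting total curvature, homeomorphic to the closed upper half-plane, with totally geodesic boundary, and fix a base point O ∈ ∂M; parametrize the rays emanating from O by their initial angle θ ∈ [0, π], where γ₀ and γ_π are the two boundary rays. Then the set I₀ = { θ ∈ [0, π] : d_∞(γ₀, γ_θ) < ∞ } is an interval containing 0: if θ ∈ I₀ and 0 ≤ θ' ≤ θ, then θ' ∈ I₀. -/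
/-!
`λ∞(T_{0,θ}) = θ - c(T_{0,θ})` is infinite exactly when the negative part of the curvature has
infinite integral over the sector `T_{0,θ}`: the angle is finite, and in `EReal` the difference
`c₊ - c₋` is `⊥` as soon as `c₋ = ∞`, whatever `c₊` is. Since the sectors `T_{0,θ}` increase
with `θ`, so does that integral.
-/

open Set Filter MeasureTheory Metric
open scoped ENNReal NNReal Topology

/-- Abstract packaging of a complete Riemannian surface: the underlying metric
space of the Riemannian metric, together with its geodesics, its Gaussian
curvature, its Riemannian area measure, the Riemannian angle, and the
(differential-geometric, hence here abstractly recorded) property of having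
no conjugate points. -/
structure RiemannianSurface where
  /-- the underlying set of points -/
  M : Type
  /-- the distance function induced by the Riemannian metric -/
  [metric : MetricSpace M]
  [mble : MeasurableSpace M]
  borel : BorelSpace M
  /-- the Riemannian metric is complete -/
  complete : CompleteSpace M
  /-- the complete unit-speed geodesics of the Riemannian metric -/
  IsGeodesic : (ℝ → M) → Prop
  /-- the unit-speed geodesic segments `σ : [a, b] → M` of the Riemannian metric -/
  IsGeodesicSegment : (ℝ → M) → ℝ → ℝ → Prop
  /-- a metric line is a (complete, globally minimizing) geodesic -/
  line_isGeodesic : ∀ γ : ℝ → M, IsLine γ → IsGeodesic γ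
  /-- the restriction of a complete geodesic to an interval is a geodesic segment -/
  geodesic_isGeodesicSegment : ∀ (γ : ℝ → M) (a b : ℝ), IsGeodesic γ → IsGeodesicSegment γ a b
  /-- a minimizing segment is a geodesic segment -/
  minimizing_isGeodesicSegment : ∀ (σ : ℝ → M) (a b : ℝ),
    IsMinimizingSegment σ a b → IsGeodesicSegment σ a b
  /-- the Gaussian curvature -/
  K : M → ℝ
  /-- the Riemannian area measure -/
  area : MeasureTheory.Measure M
  /-- `angle p x y` is the angle `∠ₚ(x, y)` at `p` subtended by `x` and `y`
  (the angle at `p` between the initial directions of minimizing geodesics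
  from `p` to `x` and to `y`) -/
  angle : M → M → M → ℝ
  /-- the Riemannian metric has no conjugate points: no geodesic contains a pair
  of mutually conjugate points -/
  NoConjugatePoints : Prop

attribute [instance] RiemannianSurface.metric RiemannianSurface.mble

namespace RiemannianSurface

variable (S : RiemannianSurface)

/-- the total positive curvature `c₊(M) = ∫_M K⁺ dμ`, as an extended nonnegative real -/
noncomputable def cPlus : ℝ≥0∞ := ∫⁻ x, ENNReal.ofReal (S.K x) ∂S.area

/-- `∫_M (-K⁻) dμ = -c₋(M)`, the absolute value of the total negative curvature,
as an extended nonnegative real -/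
noncomputable def cMinus : ℝ≥0∞ := ∫⁻ x, ENNReal.ofReal (-S.K x) ∂S.area

/-- `M` admits total curvature if at least one of `c₊(M)`, `c₋(M)` is finite -/
def AdmitsTotalCurvature : Prop := S.cPlus ≠ ⊤ ∨ S.cMinus ≠ ⊤

/-- the total curvature `c(M) = c₊(M) + c₋(M) = ∫_M K dμ`, as an extended real -/
noncomputable def totalCurvature : EReal := (S.cPlus : EReal) - (S.cMinus : EReal)

/-- the total curvature `c(A) = ∫_A K dμ` of a region `A ⊆ M`, as an extended real -/
noncomputable def cOn (A : Set S.M) : EReal :=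
  ((∫⁻ x in A, ENNReal.ofReal (S.K x) ∂S.area : ℝ≥0∞) : EReal) -
    ((∫⁻ x in A, ENNReal.ofReal (-S.K x) ∂S.area : ℝ≥0∞) : EReal)

/-- `M` satisfies the visibility axiom at `p`: for every `ε > 0` there is `R > 0`
such that every geodesic segment staying at distance `> R` from `p` subtends an
angle at most `ε` at `p`. -/
def VisibilityAt (p : S.M) : Prop :=
  ∀ ε : ℝ, 0 < ε → ∃ R : ℝ, 0 < R ∧
    ∀ (σ : ℝ → S.M) (a b : ℝ), a ≤ b → S.IsGeodesicSegment σ a b →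
      (∀ t ∈ Set.Icc a b, R < dist p (σ t)) → S.angle p (σ a) (σ b) ≤ ε

end RiemannianSurface

/-- A Riemannian surface homeomorphic to the closed upper half-plane, with totally
geodesic boundary, together with a base point `O` on the boundary and the family of
rays emanating from `O`, parametrized by their initial angle `θ ∈ [0, π]`
(the rays `γ₀` and `γ_π` being the two boundary rays). -/
structure HalfPlaneSurface where
  S : RiemannianSurface
  /-- the surface is homeomorphic to the closed upper half-plane -/
  halfPlane : Nonempty (S.M ≃ₜ (ℝ × {y : ℝ // 0 ≤ y}))
  /-- the base point on the boundary -/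
  O : S.M
  /-- `ray θ` is the ray emanating from `O` with initial angle `θ`, for `θ ∈ [0, π]` -/
  ray : ℝ → ℝ → S.M
  ray_isRay : ∀ θ ∈ Set.Icc (0 : ℝ) Real.pi, IsRay (ray θ)
  ray_base : ∀ θ ∈ Set.Icc (0 : ℝ) Real.pi, ray θ 0 = O
  /-- `θ` is the initial angle of `ray θ`: the angle at `O` subtended by points on
  `ray θ` and on `ray θ'` is `|θ - θ'|` -/
  ray_angle : ∀ θ ∈ Set.Icc (0 : ℝ) Real.pi, ∀ θ' ∈ Set.Icc (0 : ℝ) Real.pi,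
    ∀ t t' : ℝ, 0 < t → 0 < t' → S.angle O (ray θ t) (ray θ' t') = |θ - θ'|
  /-- every point of the surface lies on one of the rays from `O` -/
  fills : ∀ x : S.M, ∃ θ ∈ Set.Icc (0 : ℝ) Real.pi, ∃ t : ℝ, 0 ≤ t ∧ ray θ t = x
  /-- the boundary (the union of the rays of angles `0` and `π`) is totally geodesic:
  it is the image of a complete geodesic line -/
  boundary_geodesic : ∃ γ : ℝ → S.M, IsLine γ ∧
    Set.range γ = ray Real.pi '' Set.Ici 0 ∪ ray 0 '' Set.Ici 0

namespace HalfPlaneSurface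

/-- the (unique) closed sector `T_{α,β}` bounded by the rays of angles `α ≤ β`:
the union of the rays of angles `θ ∈ [α, β]` -/
def sector (H : HalfPlaneSurface) (α β : ℝ) : Set H.S.M :=
  ⋃ θ ∈ Set.Icc α β, H.ray θ '' Set.Ici (0 : ℝ)

/-- `λ∞(T_{α,β}) = (β - α) - c(T_{α,β})`: the interior angle at `O` of the sector
minus its total curvature, for `α ≤ β` -/
noncomputable def lambdaInf (H : HalfPlaneSurface) (α β : ℝ) : EReal :=
  ((β - α : ℝ) : EReal) - H.S.cOn (H.sector α β)

/-- `d∞(γ_α, γ_β) = λ∞(T_{α,β})`, for `α ≤ β` -/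
noncomputable def dInf (H : HalfPlaneSurface) (α β : ℝ) : EReal := H.lambdaInf α β

end HalfPlaneSurface

namespace EReal

theorem coe_sub_eq_top_iff (x : ℝ) (y : EReal) : (x : EReal) - y = ⊤ ↔ y = ⊥ := by
  induction y <;> simp [← EReal.coe_sub]

theorem coe_ennreal_sub_coe_ennreal_eq_bot_iff (a b : ℝ≥0∞) :
    (a : EReal) - b = ⊥ ↔ b = ⊤ := by
  induction a <;> induction b <;> simp [EReal.coe_nnreal_eq_coe_real, ← EReal.coe_sub]

end EReal

namespace HalfPlaneSurface

variable (H : HalfPlaneSurface)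

theorem sector_mono_right {α β β' : ℝ} (h : β ≤ β') : H.sector α β ⊆ H.sector α β' :=
  biUnion_subset_biUnion_left (Icc_subset_Icc_right h)

theorem lambdaInf_eq_top_iff (α β : ℝ) :
    H.lambdaInf α β = ⊤ ↔ ∫⁻ x in H.sector α β, ENNReal.ofReal (-H.S.K x) ∂H.S.area = ⊤ :=
  (EReal.coe_sub_eq_top_iff _ _).trans (EReal.coe_ennreal_sub_coe_ennreal_eq_bot_iff _ _)

theorem lambdaInf_ne_top_of_le {α β β' : ℝ} (h : β ≤ β') (hfin : H.lambdaInf α β' ≠ ⊤) :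
    H.lambdaInf α β ≠ ⊤ := by
  rw [Ne, lambdaInf_eq_top_iff] at hfin ⊢
  exact ne_top_of_le_ne_top hfin (lintegral_mono_set (H.sector_mono_right h))

end HalfPlaneSurface

theorem dInf_finite_is_interval_general
    (H : HalfPlaneSurface)
    (θ : ℝ)
    (hfin : H.dInf 0 θ ≠ ⊤)
    (θ' : ℝ) (hle : θ' ≤ θ) :
    H.dInf 0 θ' ≠ ⊤ :=
  H.lambdaInf_ne_top_of_le hle hfin

/-- Let `M` be a Riemannian surface without conjugate points
admitting total curvature, homeomorphic to the closed upper half-plane, with totally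
geodesic boundary, base point `O ∈ ∂M`, and rays from `O` parametrized by initial
angle `θ ∈ [0, π]` (with `γ₀`, `γ_π` the boundary rays). Then the set
`I₀ = {θ ∈ [0, π] : d∞(γ₀, γ_θ) < ∞}` is an interval containing `0`: if `θ ∈ I₀` and
`0 ≤ θ' ≤ θ`, then `θ' ∈ I₀`. -/
theorem dInf_finite_is_interval
    (H : HalfPlaneSurface)
    (hncp : H.S.NoConjugatePoints)
    (htc : H.S.AdmitsTotalCurvature)
    (θ : ℝ) (hθ : θ ∈ Set.Icc (0 : ℝ) Real.pi)
    (hfin : H.dInf 0 θ ≠ ⊤)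
    (θ' : ℝ) (h0' : 0 ≤ θ') (hle : θ' ≤ θ) :
    H.dInf 0 θ' ≠ ⊤ :=
  dInf_finite_is_interval_general H θ hfin θ' hle
end
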